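/- arXiv:1911.09802 — 2 statements merged into one kernel-verified Lean document; each statement's English description precedes it below -/
import Mathlib

section
/- Let X ~ N(γ, σ_X²), Y ~ N(βγ, σ_Y²), and Z ~ N(γ, σ*²) be mutually independent Gaussians, λ ≥ 0, I the indicator of {|Z| > λσ*}, and q = P(|Z| > λσ*). Then Var[(XY − βX²)/σ_Y² · I] = [(w + v) + β² v (w + 3v)] q − β² v² q², where w = γ²/σ_Y² and v = σ_X²/σ_Y². -/
/-!
Since the pair `(X, Y)` is independent of `Z`, the variable `f = (XY - βX²)/σ_Y²` is independent
of the indicator `I`, and `I² = I`; hence `Var[f I] = E[f²] q - (E f)² q²`. Expanding, `E f` and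
`E f²` only involve `E X^k` for `k ≤ 4` and `E Y^k` for `k ≤ 2`. The Gaussian moments are the
derivatives at `0` of the moment generating function `exp (μ t + v t² / 2)`, whose `n`-th
derivative is `Pₙ(μ + v t) exp (μ t + v t² / 2)` with `P₀ = 1`, `Pₙ₊₁(x) = v Pₙ'(x) + x Pₙ(x)`.
-/

open MeasureTheory ProbabilityTheory
open scoped NNReal

section GaussianMoments

open Polynomial in
noncomputable def gaussianMomentPoly (v : ℝ) : ℕ → ℝ[X]
  | 0 => 1
  | n + 1 => C v * derivative (gaussianMomentPoly v n) + X * gaussianMomentPoly v n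

open Polynomial in
lemma iteratedDeriv_exp_quadratic (μ v : ℝ) (n : ℕ) :
    iteratedDeriv n (fun t => Real.exp (μ * t + v * t ^ 2 / 2)) =
      fun t => (gaussianMomentPoly v n).eval (μ + v * t) * Real.exp (μ * t + v * t ^ 2 / 2) := by
  induction n with
  | zero => simp [gaussianMomentPoly]
  | succ n ih =>
    ext t
    rw [iteratedDeriv_succ, ih]
    have hlin : HasDerivAt (fun s => μ + v * s) v t := by
      simpa using ((hasDerivAt_id t).const_mul v).const_add μ
    have hquad : HasDerivAt (fun s => μ * s + v * s ^ 2 / 2) (μ + v * t) t :=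
      (((hasDerivAt_id' t).const_mul μ).add
        (((hasDerivAt_pow 2 t).const_mul v).div_const 2)).congr_deriv (by norm_num; ring)
    refine (((Polynomial.hasDerivAt _ _).comp t hlin).mul hquad.exp).deriv.trans ?_
    simp only [gaussianMomentPoly, Function.comp_apply, eval_add, eval_mul, eval_C, eval_X]
    ring

lemma integral_pow_gaussianReal (μ : ℝ) (v : ℝ≥0) (n : ℕ) :
    ∫ x, x ^ n ∂gaussianReal μ v = (gaussianMomentPoly v n).eval μ := by
  have h := iteratedDeriv_mgf_zero (X := fun x => x) (μ := gaussianReal μ v) (by simp) n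
  rw [mgf_fun_id_gaussianReal, iteratedDeriv_exp_quadratic] at h
  simpa using h.symm

lemma integrable_pow_gaussianReal (μ : ℝ) (v : ℝ≥0) (n : ℕ) :
    Integrable (fun x => x ^ n) (gaussianReal μ v) :=
  integrable_pow_of_mem_interior_integrableExpSet (X := fun x => x) (by simp) n

variable (μ v : ℝ)

lemma eval_gaussianMomentPoly_zero : (gaussianMomentPoly v 0).eval μ = 1 := by
  simp [gaussianMomentPoly]

lemma eval_gaussianMomentPoly_one : (gaussianMomentPoly v 1).eval μ = μ := by
  simp [gaussianMomentPoly]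

lemma eval_gaussianMomentPoly_two : (gaussianMomentPoly v 2).eval μ = μ ^ 2 + v := by
  simp [gaussianMomentPoly]; ring

lemma eval_gaussianMomentPoly_three : (gaussianMomentPoly v 3).eval μ = μ ^ 3 + 3 * μ * v := by
  simp [gaussianMomentPoly]; ring

lemma eval_gaussianMomentPoly_four :
    (gaussianMomentPoly v 4).eval μ = μ ^ 4 + 6 * μ ^ 2 * v + 3 * v ^ 2 := by
  simp [gaussianMomentPoly]; ring

end GaussianMoments

lemma variance_mul_indicator_of_indepFun {Ω : Type*} [MeasurableSpace Ω] {P : Measure Ω}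
    [IsProbabilityMeasure P] {f : Ω → ℝ} {A : Set Ω} (hf : MemLp f 2 P)
    (hA : MeasurableSet A) (hfA : IndepFun f (A.indicator fun _ => (1 : ℝ)) P) :
    Var[fun ω => f ω * A.indicator (fun _ => (1 : ℝ)) ω; P] =
      P[fun ω => f ω ^ 2] * P.real A - P[f] ^ 2 * P.real A ^ 2 := by
  set I := A.indicator fun _ => (1 : ℝ)
  have hI : AEStronglyMeasurable I P := aestronglyMeasurable_const.indicator hA
  have hEI : P[I] = P.real A := integral_indicator_one hA
  have hf2A : IndepFun (fun ω => f ω ^ 2) I P := hfA.comp (measurable_id.pow_const 2) measurable_id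
  have hfI : (fun ω => f ω * I ω) = A.indicator f := by
    ext ω; by_cases h : ω ∈ A <;> simp [I, h]
  have hsq : (fun ω => f ω * I ω) ^ 2 = fun ω => f ω ^ 2 * I ω := by
    ext ω; by_cases h : ω ∈ A <;> simp [I, h]
  rw [variance_eq_sub (hfI ▸ hf.indicator hA), hsq,
    hf2A.integral_fun_mul_eq_mul_integral (hf.aestronglyMeasurable.pow 2) hI,
    hfA.integral_fun_mul_eq_mul_integral hf.aestronglyMeasurable hI, hEI]
  ring

section GaussianPair

variable {Ω : Type*} [MeasurableSpace Ω] {P : Measure Ω} {X Y : Ω → ℝ} {a b : ℝ} {vX vY : ℝ≥0}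

lemma ProbabilityTheory.HasLaw.integrable_pow_of_gaussianReal
    (hX : HasLaw X (gaussianReal a vX) P) (n : ℕ) : Integrable (fun ω => X ω ^ n) P :=
  (integrable_map_measure (continuous_pow n).aestronglyMeasurable hX.aemeasurable).mp
    (hX.map_eq ▸ integrable_pow_gaussianReal a vX n)

lemma ProbabilityTheory.HasLaw.integral_pow_of_gaussianReal
    (hX : HasLaw X (gaussianReal a vX) P) (n : ℕ) :
    ∫ ω, X ω ^ n ∂P = (gaussianMomentPoly vX n).eval a :=
  (hX.integral_comp (f := fun x => x ^ n) (continuous_pow n).aestronglyMeasurable).trans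
    (integral_pow_gaussianReal a vX n)

lemma integrable_pow_mul_pow_of_gaussianReal (hX : HasLaw X (gaussianReal a vX) P)
    (hY : HasLaw Y (gaussianReal b vY) P) (hXY : IndepFun X Y P) (m n : ℕ) :
    Integrable (fun ω => X ω ^ m * Y ω ^ n) P :=
  (hXY.comp (measurable_id.pow_const m) (measurable_id.pow_const n)).integrable_mul
    (hX.integrable_pow_of_gaussianReal m) (hY.integrable_pow_of_gaussianReal n)

lemma integral_pow_mul_pow_of_gaussianReal (hX : HasLaw X (gaussianReal a vX) P)
    (hY : HasLaw Y (gaussianReal b vY) P) (hXY : IndepFun X Y P) (m n : ℕ) :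
    ∫ ω, X ω ^ m * Y ω ^ n ∂P =
      (gaussianMomentPoly vX m).eval a * (gaussianMomentPoly vY n).eval b := by
  rw [hXY.integral_fun_comp_mul_comp (f := fun x => x ^ m) (g := fun y => y ^ n) hX.aemeasurable
    hY.aemeasurable (by fun_prop) (by fun_prop), hX.integral_pow_of_gaussianReal,
    hY.integral_pow_of_gaussianReal]

lemma integral_mul_sub_mul_sq_of_gaussianReal (hX : HasLaw X (gaussianReal a vX) P)
    (hY : HasLaw Y (gaussianReal b vY) P) (hXY : IndepFun X Y P) (β : ℝ) :
    ∫ ω, X ω * Y ω - β * X ω ^ 2 ∂P = a * b - β * (a ^ 2 + vX) := by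
  have h := integrable_pow_mul_pow_of_gaussianReal hX hY hXY
  calc ∫ ω, X ω * Y ω - β * X ω ^ 2 ∂P
      = ∫ ω, X ω ^ 1 * Y ω ^ 1 - β * (X ω ^ 2 * Y ω ^ 0) ∂P := by simp
    _ = a * b - β * (a ^ 2 + vX) := by
      rw [integral_sub (h 1 1) ((h 2 0).const_mul β), integral_const_mul]
      simp only [integral_pow_mul_pow_of_gaussianReal hX hY hXY, eval_gaussianMomentPoly_zero,
        eval_gaussianMomentPoly_one, eval_gaussianMomentPoly_two]
      ring

lemma integral_mul_sub_mul_sq_sq_of_gaussianReal (hX : HasLaw X (gaussianReal a vX) P)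
    (hY : HasLaw Y (gaussianReal b vY) P) (hXY : IndepFun X Y P) (β : ℝ) :
    ∫ ω, (X ω * Y ω - β * X ω ^ 2) ^ 2 ∂P =
      (a ^ 2 + vX) * (b ^ 2 + vY) - 2 * β * (a ^ 3 + 3 * a * vX) * b +
        β ^ 2 * (a ^ 4 + 6 * a ^ 2 * vX + 3 * vX ^ 2) := by
  have h := integrable_pow_mul_pow_of_gaussianReal hX hY hXY
  have h22 := h 2 2
  have h31 := h 3 1
  have h40 := h 4 0
  calc ∫ ω, (X ω * Y ω - β * X ω ^ 2) ^ 2 ∂P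
      = ∫ ω, X ω ^ 2 * Y ω ^ 2 - 2 * β * (X ω ^ 3 * Y ω ^ 1) + β ^ 2 * (X ω ^ 4 * Y ω ^ 0) ∂P := by
        congr 1; ext ω; ring
    _ = _ := by
      rw [integral_add (by fun_prop) (by fun_prop), integral_sub (by fun_prop) (by fun_prop),
        integral_const_mul, integral_const_mul]
      simp only [integral_pow_mul_pow_of_gaussianReal hX hY hXY, eval_gaussianMomentPoly_zero,
        eval_gaussianMomentPoly_one, eval_gaussianMomentPoly_two, eval_gaussianMomentPoly_three,
        eval_gaussianMomentPoly_four]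
      ring

lemma memLp_two_mul_sub_mul_sq_of_gaussianReal (hX : HasLaw X (gaussianReal a vX) P)
    (hY : HasLaw Y (gaussianReal b vY) P) (hXY : IndepFun X Y P) (β : ℝ) :
    MemLp (fun ω => X ω * Y ω - β * X ω ^ 2) 2 P := by
  have h := integrable_pow_mul_pow_of_gaussianReal hX hY hXY
  have h22 := h 2 2
  have h31 := h 3 1
  have h40 := h 4 0
  have hXm := hX.aemeasurable
  have hYm := hY.aemeasurable
  rw [memLp_two_iff_integrable_sq (by fun_prop)]
  convert (show Integrable (fun ω => X ω ^ 2 * Y ω ^ 2 - 2 * β * (X ω ^ 3 * Y ω ^ 1) +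
    β ^ 2 * (X ω ^ 4 * Y ω ^ 0)) P by fun_prop) using 2
  ring

end GaussianPair

theorem stmt_6_general {Ω : Type*} [MeasureSpace Ω] [IsProbabilityMeasure (ℙ : Measure Ω)]
    (β γ σX σY σs l : ℝ)
    (X Y Z : Ω → ℝ) (hXm : Measurable X) (hYm : Measurable Y) (hZm : Measurable Z)
    (hX : Measure.map X ℙ = gaussianReal γ (Real.toNNReal (σX ^ 2)))
    (hY : Measure.map Y ℙ = gaussianReal (β * γ) (Real.toNNReal (σY ^ 2)))
    (hind : iIndepFun ![X, Y, Z] ℙ) :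
    variance (fun ω => (X ω * Y ω - β * X ω ^ 2) / σY ^ 2 *
        Set.indicator {ω' : Ω | l * σs < |Z ω'|} (fun _ => (1 : ℝ)) ω) ℙ =
      ((γ ^ 2 / σY ^ 2 + σX ^ 2 / σY ^ 2) +
          β ^ 2 * (σX ^ 2 / σY ^ 2) * (γ ^ 2 / σY ^ 2 + 3 * (σX ^ 2 / σY ^ 2))) *
        (ℙ {ω | l * σs < |Z ω|}).toReal -
      β ^ 2 * (σX ^ 2 / σY ^ 2) ^ 2 * (ℙ {ω | l * σs < |Z ω|}).toReal ^ 2 := by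
  have hXlaw : HasLaw X (gaussianReal γ (Real.toNNReal (σX ^ 2))) ℙ := ⟨hXm.aemeasurable, hX⟩
  have hYlaw : HasLaw Y (gaussianReal (β * γ) (Real.toNNReal (σY ^ 2))) ℙ := ⟨hYm.aemeasurable, hY⟩
  have hXY : IndepFun X Y ℙ := hind.indepFun (show (0 : Fin 3) ≠ 1 by decide)
  have hmeas : ∀ i, Measurable (![X, Y, Z] i) := fun i => by fin_cases i <;> assumption
  have hS : MeasurableSet {x : ℝ | l * σs < |x|} := measurableSet_lt measurable_const measurable_abs
  have hfA : IndepFun (fun ω => (X ω * Y ω - β * X ω ^ 2) / σY ^ 2)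
      ({ω | l * σs < |Z ω|}.indicator fun _ => (1 : ℝ)) ℙ :=
    (hind.indepFun_prodMk hmeas 0 1 2 (by decide) (by decide)).comp
      (φ := fun p : ℝ × ℝ => (p.1 * p.2 - β * p.1 ^ 2) / σY ^ 2)
      (ψ := {x : ℝ | l * σs < |x|}.indicator fun _ => 1) (by fun_prop)
      (measurable_const.indicator hS)
  have hf : MemLp (fun ω => (X ω * Y ω - β * X ω ^ 2) / σY ^ 2) 2 ℙ := by
    simpa only [div_eq_mul_inv] using
      (memLp_two_mul_sub_mul_sq_of_gaussianReal hXlaw hYlaw hXY β).mul_const (σY ^ 2)⁻¹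
  rw [variance_mul_indicator_of_indepFun hf (A := {ω | l * σs < |Z ω|}) (hZm hS) hfA]
  simp only [div_pow, integral_div, integral_mul_sub_mul_sq_of_gaussianReal hXlaw hYlaw hXY,
    integral_mul_sub_mul_sq_sq_of_gaussianReal hXlaw hYlaw hXY,
    Real.coe_toNNReal _ (sq_nonneg _), measureReal_def]
  field_simp
  ring

theorem stmt_6 {Ω : Type*} [MeasureSpace Ω] [IsProbabilityMeasure (ℙ : Measure Ω)]
    (β γ σX σY σs l : ℝ) (hσX : 0 < σX) (hσY : 0 < σY) (hσs : 0 < σs) (hl : 0 ≤ l)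
    (X Y Z : Ω → ℝ) (hXm : Measurable X) (hYm : Measurable Y) (hZm : Measurable Z)
    (hX : Measure.map X ℙ = gaussianReal γ (Real.toNNReal (σX ^ 2)))
    (hY : Measure.map Y ℙ = gaussianReal (β * γ) (Real.toNNReal (σY ^ 2)))
    (hZ : Measure.map Z ℙ = gaussianReal γ (Real.toNNReal (σs ^ 2)))
    (hind : iIndepFun ![X, Y, Z] ℙ) :
    variance (fun ω => (X ω * Y ω - β * X ω ^ 2) / σY ^ 2 *
        Set.indicator {ω' : Ω | l * σs < |Z ω'|} (fun _ => (1 : ℝ)) ω) ℙ =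
      ((γ ^ 2 / σY ^ 2 + σX ^ 2 / σY ^ 2) +
          β ^ 2 * (σX ^ 2 / σY ^ 2) * (γ ^ 2 / σY ^ 2 + 3 * (σX ^ 2 / σY ^ 2))) *
        (ℙ {ω | l * σs < |Z ω|}).toReal -
      β ^ 2 * (σX ^ 2 / σY ^ 2) ^ 2 * (ℙ {ω | l * σs < |Z ω|}).toReal ^ 2 :=
  stmt_6_general β γ σX σY σs l X Y Z hXm hYm hZm hX hY hind
end

section
/- Suppose X ~ N(γ, σ_X²) and, conditional on α, Y ~ N(α + βγ, σ_Y²), where α ~ N(0, τ²) is independent of X. Then E[XY − βX² + βσ_X²] = 0 and Var[(XY − βX² + βσ_X²)/σ_Y²] = (1 + τ²/σ_Y²)(w + v) + β² v (w + 2v), where w = γ²/σ_Y² and v = σ_X²/σ_Y². -/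
open MeasureTheory ProbabilityTheory Real Set


lemma intg (n : ℕ) {b : ℝ} (hb : 0 < b) :
    Integrable (fun x : ℝ => x ^ n * Real.exp (-b * x ^ 2)) := by
  have h := integrable_rpow_mul_exp_neg_mul_sq hb (s := n) (lt_of_lt_of_le (by norm_num) (Nat.cast_nonneg n))
  simpa [Real.rpow_natCast] using h

lemma Jodd {n : ℕ} (hn : Odd n) (b : ℝ) :
    ∫ x : ℝ, x ^ n * Real.exp (-b * x ^ 2) = 0 := by
  have h := MeasureTheory.integral_neg_eq_self (fun x : ℝ => x ^ n * Real.exp (-b * x ^ 2)) volume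
  have h2 : ∫ x : ℝ, (-x) ^ n * Real.exp (-b * (-x) ^ 2)
      = ∫ x : ℝ, -(x ^ n * Real.exp (-b * x ^ 2)) := by
    congr 1; ext x; rw [hn.neg_pow, neg_sq]; ring
  rw [h2, integral_neg] at h
  linarith

lemma JIoi (n : ℕ) {b : ℝ} (hb : 0 < b) :
    ∫ x in Ioi (0:ℝ), x ^ n * Real.exp (-b * x ^ 2)
      = b ^ (-((n:ℝ) + 1) / 2) * (1 / 2) * Real.Gamma (((n:ℝ) + 1) / 2) := by
  rw [← integral_rpow_mul_exp_neg_mul_rpow two_pos (q := (n:ℝ))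
      (lt_of_lt_of_le (by norm_num) (Nat.cast_nonneg n)) hb]
  exact setIntegral_congr_fun measurableSet_Ioi fun x hx => by
    rw [Real.rpow_natCast, Real.rpow_two]

lemma Jeven {n : ℕ} (hn : Even n) {b : ℝ} (hb : 0 < b) :
    ∫ x : ℝ, x ^ n * Real.exp (-b * x ^ 2)
      = b ^ (-((n:ℝ) + 1) / 2) * Real.Gamma (((n:ℝ) + 1) / 2) := by
  calc ∫ x : ℝ, x ^ n * Real.exp (-b * x ^ 2)
      = ∫ x : ℝ, |x| ^ n * Real.exp (-b * |x| ^ 2) := by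
        congr 1; ext x; rw [hn.pow_abs, sq_abs]
    _ = 2 * ∫ x in Ioi (0:ℝ), x ^ n * Real.exp (-b * x ^ 2) :=
        integral_comp_abs (f := fun t => t ^ n * Real.exp (-b * t ^ 2))
    _ = _ := by rw [JIoi n hb]; ring

lemma J0 {b : ℝ} (hb : 0 < b) : ∫ x : ℝ, Real.exp (-b * x ^ 2) = Real.sqrt (π / b) :=
  integral_gaussian b

lemma J2 {b : ℝ} (hb : 0 < b) :
    ∫ x : ℝ, x ^ 2 * Real.exp (-b * x ^ 2) = b ^ (-(3:ℝ)/2) * (Real.sqrt π / 2) := by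
  rw [Jeven (by decide) hb]
  have h32 : ((2:ℕ):ℝ) + 1 = 3 := by norm_num
  rw [h32]
  have : Real.Gamma (3/2) = Real.sqrt π / 2 := by
    have := Real.Gamma_add_one (s := 1/2) (by norm_num)
    rw [show (1:ℝ)/2 + 1 = 3/2 by norm_num, Real.Gamma_one_half_eq] at this
    rw [this]; ring
  rw [this]

lemma J4 {b : ℝ} (hb : 0 < b) :
    ∫ x : ℝ, x ^ 4 * Real.exp (-b * x ^ 2) = b ^ (-(5:ℝ)/2) * (3 * Real.sqrt π / 4) := by
  rw [Jeven (by decide) hb]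
  have h54 : ((4:ℕ):ℝ) + 1 = 5 := by norm_num
  rw [h54]
  have h32 : Real.Gamma (3/2) = Real.sqrt π / 2 := by
    have := Real.Gamma_add_one (s := 1/2) (by norm_num)
    rw [show (1:ℝ)/2 + 1 = 3/2 by norm_num, Real.Gamma_one_half_eq] at this
    rw [this]; ring
  have : Real.Gamma (5/2) = 3 * Real.sqrt π / 4 := by
    have := Real.Gamma_add_one (s := 3/2) (by norm_num)
    rw [show (3:ℝ)/2 + 1 = 5/2 by norm_num, h32] at this
    rw [this]; ring
  rw [this]

lemma poly_integrable {b : ℝ} (hb : 0 < b) (c0 c1 c2 c3 c4 : ℝ) :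
    Integrable (fun x : ℝ =>
      (c4 * x ^ 4 + c3 * x ^ 3 + c2 * x ^ 2 + c1 * x + c0) * Real.exp (-b * x ^ 2)) := by
  have h : (fun x : ℝ =>
      (c4 * x ^ 4 + c3 * x ^ 3 + c2 * x ^ 2 + c1 * x + c0) * Real.exp (-b * x ^ 2))
      = fun x : ℝ => c4 * (x ^ 4 * Real.exp (-b * x ^ 2))
        + (c3 * (x ^ 3 * Real.exp (-b * x ^ 2))
        + (c2 * (x ^ 2 * Real.exp (-b * x ^ 2))
        + (c1 * (x ^ 1 * Real.exp (-b * x ^ 2))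
        + c0 * (x ^ 0 * Real.exp (-b * x ^ 2))))) := by
    funext x; ring
  rw [h]
  exact ((intg 4 hb).const_mul _).add (((intg 3 hb).const_mul _).add
    (((intg 2 hb).const_mul _).add (((intg 1 hb).const_mul _).add ((intg 0 hb).const_mul _))))

lemma poly_gauss {b : ℝ} (hb : 0 < b) (c0 c1 c2 c3 c4 : ℝ) :
    ∫ x : ℝ, (c4 * x ^ 4 + c3 * x ^ 3 + c2 * x ^ 2 + c1 * x + c0) * Real.exp (-b * x ^ 2)
      = c4 * (b ^ (-(5:ℝ)/2) * (3 * Real.sqrt π / 4))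
        + c2 * (b ^ (-(3:ℝ)/2) * (Real.sqrt π / 2)) + c0 * Real.sqrt (π / b) := by
  have h : (fun x : ℝ =>
      (c4 * x ^ 4 + c3 * x ^ 3 + c2 * x ^ 2 + c1 * x + c0) * Real.exp (-b * x ^ 2))
      = fun x : ℝ => c4 * (x ^ 4 * Real.exp (-b * x ^ 2))
        + (c3 * (x ^ 3 * Real.exp (-b * x ^ 2))
        + (c2 * (x ^ 2 * Real.exp (-b * x ^ 2))
        + (c1 * (x ^ 1 * Real.exp (-b * x ^ 2))
        + c0 * (x ^ 0 * Real.exp (-b * x ^ 2))))) := by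
    funext x; ring
  have h0i : Integrable (fun x : ℝ => c0 * (x ^ 0 * Real.exp (-b * x ^ 2))) volume := by
    exact (intg 0 hb).const_mul _
  have h1i : Integrable (fun x : ℝ => c1 * (x ^ 1 * Real.exp (-b * x ^ 2))) volume := by
    exact (intg 1 hb).const_mul _
  have h2i : Integrable (fun x : ℝ => c2 * (x ^ 2 * Real.exp (-b * x ^ 2))) volume := by
    exact (intg 2 hb).const_mul _
  have h3i : Integrable (fun x : ℝ => c3 * (x ^ 3 * Real.exp (-b * x ^ 2))) volume := by
    exact (intg 3 hb).const_mul _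
  have h4i : Integrable (fun x : ℝ => c4 * (x ^ 4 * Real.exp (-b * x ^ 2))) volume := by
    exact (intg 4 hb).const_mul _
  have g10 : Integrable (fun x : ℝ => c1 * (x ^ 1 * Real.exp (-b * x ^ 2))
      + c0 * (x ^ 0 * Real.exp (-b * x ^ 2))) volume := by exact h1i.add h0i
  have g210 : Integrable (fun x : ℝ => c2 * (x ^ 2 * Real.exp (-b * x ^ 2))
      + (c1 * (x ^ 1 * Real.exp (-b * x ^ 2)) + c0 * (x ^ 0 * Real.exp (-b * x ^ 2)))) volume := by
    exact h2i.add g10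
  have g3210 : Integrable (fun x : ℝ => c3 * (x ^ 3 * Real.exp (-b * x ^ 2))
      + (c2 * (x ^ 2 * Real.exp (-b * x ^ 2))
      + (c1 * (x ^ 1 * Real.exp (-b * x ^ 2)) + c0 * (x ^ 0 * Real.exp (-b * x ^ 2))))) volume := by
    exact h3i.add g210
  rw [h, integral_add h4i g3210, integral_add h3i g210, integral_add h2i g10,
    integral_add h1i h0i]
  simp only [integral_const_mul, pow_one]
  have hJ1 : ∫ a : ℝ, a * Real.exp (-b * a ^ 2) = 0 := by
    simpa using Jodd (n := 1) (by decide) b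
  have h0 : ∫ x : ℝ, x ^ 0 * Real.exp (-b * x ^ 2) = Real.sqrt (π / b) := by
    simp only [pow_zero, one_mul]; exact J0 hb
  rw [J2 hb, J4 hb, Jodd (by decide) b, hJ1, h0]; ring

lemma K0 {v : ℝ} (hv : 0 < v) :
    (Real.sqrt (2 * π * v))⁻¹ * Real.sqrt (π / (2 * v)⁻¹) = 1 := by
  have h : π / (2 * v)⁻¹ = 2 * π * v := by field_simp
  rw [h, inv_mul_cancel₀]
  positivity

lemma K2 {v : ℝ} (hv : 0 < v) :
    (Real.sqrt (2 * π * v))⁻¹ * (((2 * v)⁻¹) ^ (-(3:ℝ)/2) * (Real.sqrt π / 2)) = v := by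
  have h1 : ((2 * v)⁻¹) ^ (-(3:ℝ)/2) = (2 * v) ^ ((3:ℝ)/2) := by
    rw [show (-(3:ℝ)/2) = -((3:ℝ)/2) by ring, Real.inv_rpow (by positivity),
      ← Real.rpow_neg (by positivity), neg_neg]
  have h2 : (2 * v) ^ ((3:ℝ)/2) = 2 * v * Real.sqrt (2 * v) := by
    rw [show ((3:ℝ)/2) = 1 + 1/2 by norm_num, Real.rpow_add (by positivity), Real.rpow_one,
      Real.sqrt_eq_rpow]
  have h3 : Real.sqrt (2 * π * v) = Real.sqrt π * Real.sqrt (2 * v) := by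
    rw [← Real.sqrt_mul Real.pi_pos.le]; ring_nf
  have hs : Real.sqrt (2 * v) ≠ 0 := by positivity
  have hp : Real.sqrt π ≠ 0 := by positivity
  have hsq : Real.sqrt (2 * v) * Real.sqrt (2 * v) = 2 * v :=
    Real.mul_self_sqrt (by positivity)
  rw [h1, h2, h3]
  field_simp

lemma K4 {v : ℝ} (hv : 0 < v) :
    (Real.sqrt (2 * π * v))⁻¹ * (((2 * v)⁻¹) ^ (-(5:ℝ)/2) * (3 * Real.sqrt π / 4)) = 3 * v ^ 2 := by
  have h1 : ((2 * v)⁻¹) ^ (-(5:ℝ)/2) = (2 * v) ^ ((5:ℝ)/2) := by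
    rw [show (-(5:ℝ)/2) = -((5:ℝ)/2) by ring, Real.inv_rpow (by positivity),
      ← Real.rpow_neg (by positivity), neg_neg]
  have h2 : (2 * v) ^ ((5:ℝ)/2) = (2 * v) ^ 2 * Real.sqrt (2 * v) := by
    rw [show ((5:ℝ)/2) = 2 + 1/2 by norm_num, Real.rpow_add (by positivity),
      Real.sqrt_eq_rpow, Real.rpow_two]
  have h3 : Real.sqrt (2 * π * v) = Real.sqrt π * Real.sqrt (2 * v) := by
    rw [← Real.sqrt_mul Real.pi_pos.le]; ring_nf
  have hs : Real.sqrt (2 * v) ≠ 0 := by positivity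
  have hp : Real.sqrt π ≠ 0 := by positivity
  have hsq : Real.sqrt (2 * v) * Real.sqrt (2 * v) = 2 * v :=
    Real.mul_self_sqrt (by positivity)
  rw [h1, h2, h3]
  field_simp
  ring

lemma pdf_eq {m v : ℝ} (hv : 0 ≤ v) (x : ℝ) :
    gaussianPDFReal m v.toNNReal x
      = (Real.sqrt (2 * π * v))⁻¹ * Real.exp (-(x - m) ^ 2 / (2 * v)) := by
  simp [gaussianPDFReal, Real.coe_toNNReal _ hv]

lemma integral_gaussianReal_eq {m v : ℝ} (hv : 0 < v) (f : ℝ → ℝ) :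
    ∫ x, f x ∂(gaussianReal m v.toNNReal)
      = ∫ x, gaussianPDFReal m v.toNNReal x * f x := by
  have hv' : v.toNNReal ≠ 0 := by
    simp only [ne_eq, Real.toNNReal_eq_zero, not_le]; exact hv
  rw [gaussianReal_of_var_ne_zero m hv', gaussianPDF_def]
  rw [show (fun x => ENNReal.ofReal (gaussianPDFReal m v.toNNReal x))
      = fun x => ((Real.toNNReal (gaussianPDFReal m v.toNNReal x) : NNReal) : ENNReal) from rfl]
  rw [integral_withDensity_eq_integral_smul
    ((measurable_gaussianPDFReal _ _).real_toNNReal) f]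
  congr 1; ext x
  rw [NNReal.smul_def, Real.coe_toNNReal _ (gaussianPDFReal_nonneg _ _ _), smul_eq_mul]

lemma gmoment_shift {m v : ℝ} (hv : 0 < v) (f : ℝ → ℝ) :
    ∫ x, f x ∂(gaussianReal m v.toNNReal)
      = ∫ x, (Real.sqrt (2 * π * v))⁻¹ * Real.exp (-(2 * v)⁻¹ * x ^ 2) * f (x + m) := by
  rw [integral_gaussianReal_eq hv f,
    ← integral_add_right_eq_self (fun x => gaussianPDFReal m v.toNNReal x * f x) m]
  congr 1; ext x
  rw [pdf_eq hv.le, add_sub_cancel_right,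
    show -x ^ 2 / (2 * v) = -(2 * v)⁻¹ * x ^ 2 by ring]

lemma intg_gauss_iff {m v : ℝ} (hv : 0 < v) (f : ℝ → ℝ) :
    Integrable f (gaussianReal m v.toNNReal)
      ↔ Integrable (fun x => gaussianPDFReal m v.toNNReal x * f x) volume := by
  have hv' : v.toNNReal ≠ 0 := by
    simp only [ne_eq, Real.toNNReal_eq_zero, not_le]; exact hv
  rw [gaussianReal_of_var_ne_zero m hv', gaussianPDF_def]
  rw [show (fun x => ENNReal.ofReal (gaussianPDFReal m v.toNNReal x))
      = fun x => ((Real.toNNReal (gaussianPDFReal m v.toNNReal x) : NNReal) : ENNReal) from rfl]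
  rw [integrable_withDensity_iff_integrable_smul
    ((measurable_gaussianPDFReal _ _).real_toNNReal)]
  have : (fun x => Real.toNNReal (gaussianPDFReal m v.toNNReal x) • f x)
      = fun x => gaussianPDFReal m v.toNNReal x * f x := by
    funext x
    rw [NNReal.smul_def, Real.coe_toNNReal _ (gaussianPDFReal_nonneg _ _ _), smul_eq_mul]
  rw [this]

lemma intg_gauss_pow {m v : ℝ} (hv : 0 < v) {n : ℕ} (hn : n ≤ 4) :
    Integrable (fun x => x ^ n) (gaussianReal m v.toNNReal) := by
  rw [intg_gauss_iff hv]
  rw [← (measurePreserving_add_right volume m).integrable_comp_emb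
    (Homeomorph.addRight m).measurableEmbedding]
  have hb : 0 < (2 * v)⁻¹ := by positivity
  have heq : ((fun x => gaussianPDFReal m v.toNNReal x * x ^ n) ∘ (· + m))
      = fun x : ℝ => ((Real.sqrt (2 * π * v))⁻¹ * (x + m) ^ n) * Real.exp (-(2 * v)⁻¹ * x ^ 2) := by
    funext x
    simp only [Function.comp_apply]
    rw [pdf_eq hv.le, add_sub_cancel_right, show -x ^ 2 / (2 * v) = -(2 * v)⁻¹ * x ^ 2 by ring]
    ring
  rw [heq]
  set C := (Real.sqrt (2 * π * v))⁻¹ with hC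
  interval_cases n
  · rw [show (fun x : ℝ => C * (x + m) ^ 0 * Real.exp (-(2 * v)⁻¹ * x ^ 2))
        = fun x : ℝ => ((0:ℝ) * x ^ 4 + 0 * x ^ 3 + 0 * x ^ 2 + 0 * x + C)
          * Real.exp (-(2 * v)⁻¹ * x ^ 2) from funext fun x => by ring]
    exact poly_integrable hb _ _ _ _ _
  · rw [show (fun x : ℝ => C * (x + m) ^ 1 * Real.exp (-(2 * v)⁻¹ * x ^ 2))
        = fun x : ℝ => ((0:ℝ) * x ^ 4 + 0 * x ^ 3 + 0 * x ^ 2 + C * x + C * m)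
          * Real.exp (-(2 * v)⁻¹ * x ^ 2) from funext fun x => by ring]
    exact poly_integrable hb _ _ _ _ _
  · rw [show (fun x : ℝ => C * (x + m) ^ 2 * Real.exp (-(2 * v)⁻¹ * x ^ 2))
        = fun x : ℝ => ((0:ℝ) * x ^ 4 + 0 * x ^ 3 + C * x ^ 2 + C * (2 * m) * x + C * m ^ 2)
          * Real.exp (-(2 * v)⁻¹ * x ^ 2) from funext fun x => by ring]
    exact poly_integrable hb _ _ _ _ _
  · rw [show (fun x : ℝ => C * (x + m) ^ 3 * Real.exp (-(2 * v)⁻¹ * x ^ 2))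
        = fun x : ℝ => ((0:ℝ) * x ^ 4 + C * x ^ 3 + C * (3 * m) * x ^ 2 + C * (3 * m ^ 2) * x
            + C * m ^ 3) * Real.exp (-(2 * v)⁻¹ * x ^ 2) from funext fun x => by ring]
    exact poly_integrable hb _ _ _ _ _
  · rw [show (fun x : ℝ => C * (x + m) ^ 4 * Real.exp (-(2 * v)⁻¹ * x ^ 2))
        = fun x : ℝ => (C * x ^ 4 + C * (4 * m) * x ^ 3 + C * (6 * m ^ 2) * x ^ 2
            + C * (4 * m ^ 3) * x + C * m ^ 4) * Real.exp (-(2 * v)⁻¹ * x ^ 2)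
          from funext fun x => by ring]
    exact poly_integrable hb _ _ _ _ _

lemma gauss_mom1 {m v : ℝ} (hv : 0 < v) :
    ∫ x, x ∂(gaussianReal m v.toNNReal) = m := by
  have hb : 0 < (2 * v)⁻¹ := by positivity
  rw [gmoment_shift hv (fun x => x)]
  set C := (Real.sqrt (2 * π * v))⁻¹ with hC
  rw [show (fun x : ℝ => C * Real.exp (-(2 * v)⁻¹ * x ^ 2) * (x + m))
      = fun x : ℝ => C * (((0:ℝ) * x ^ 4 + 0 * x ^ 3 + 0 * x ^ 2 + 1 * x + m)
        * Real.exp (-(2 * v)⁻¹ * x ^ 2)) from funext fun x => by ring]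
  rw [integral_const_mul, poly_gauss hb]
  linear_combination m * K0 hv

lemma gauss_mom2 {m v : ℝ} (hv : 0 < v) :
    ∫ x, x ^ 2 ∂(gaussianReal m v.toNNReal) = m ^ 2 + v := by
  have hb : 0 < (2 * v)⁻¹ := by positivity
  rw [gmoment_shift hv (fun x => x ^ 2)]
  set C := (Real.sqrt (2 * π * v))⁻¹ with hC
  rw [show (fun x : ℝ => C * Real.exp (-(2 * v)⁻¹ * x ^ 2) * (x + m) ^ 2)
      = fun x : ℝ => C * (((0:ℝ) * x ^ 4 + 0 * x ^ 3 + 1 * x ^ 2 + 2 * m * x + m ^ 2)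
        * Real.exp (-(2 * v)⁻¹ * x ^ 2)) from funext fun x => by ring]
  rw [integral_const_mul, poly_gauss hb]
  linear_combination K2 hv + m ^ 2 * K0 hv

lemma gauss_mom3 {m v : ℝ} (hv : 0 < v) :
    ∫ x, x ^ 3 ∂(gaussianReal m v.toNNReal) = m ^ 3 + 3 * m * v := by
  have hb : 0 < (2 * v)⁻¹ := by positivity
  rw [gmoment_shift hv (fun x => x ^ 3)]
  set C := (Real.sqrt (2 * π * v))⁻¹ with hC
  rw [show (fun x : ℝ => C * Real.exp (-(2 * v)⁻¹ * x ^ 2) * (x + m) ^ 3)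
      = fun x : ℝ => C * (((0:ℝ) * x ^ 4 + 1 * x ^ 3 + 3 * m * x ^ 2 + 3 * m ^ 2 * x + m ^ 3)
        * Real.exp (-(2 * v)⁻¹ * x ^ 2)) from funext fun x => by ring]
  rw [integral_const_mul, poly_gauss hb]
  linear_combination 3 * m * K2 hv + m ^ 3 * K0 hv

lemma gauss_mom4 {m v : ℝ} (hv : 0 < v) :
    ∫ x, x ^ 4 ∂(gaussianReal m v.toNNReal) = m ^ 4 + 6 * m ^ 2 * v + 3 * v ^ 2 := by
  have hb : 0 < (2 * v)⁻¹ := by positivity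
  rw [gmoment_shift hv (fun x => x ^ 4)]
  set C := (Real.sqrt (2 * π * v))⁻¹ with hC
  rw [show (fun x : ℝ => C * Real.exp (-(2 * v)⁻¹ * x ^ 2) * (x + m) ^ 4)
      = fun x : ℝ => C * (((1:ℝ) * x ^ 4 + 4 * m * x ^ 3 + 6 * m ^ 2 * x ^ 2 + 4 * m ^ 3 * x
          + m ^ 4) * Real.exp (-(2 * v)⁻¹ * x ^ 2)) from funext fun x => by ring]
  rw [integral_const_mul, poly_gauss hb]
  linear_combination K4 hv + 6 * m ^ 2 * K2 hv + m ^ 4 * K0 hv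

section OmegaSide

variable {Ω : Type*} [MeasureSpace Ω] [IsProbabilityMeasure (ℙ : Measure Ω)]

lemma omega_mom {X : Ω → ℝ} (hXm : Measurable X) {m v : ℝ}
    (hX : Measure.map X ℙ = gaussianReal m v.toNNReal) (n : ℕ) :
    ∫ ω, X ω ^ n ∂ℙ = ∫ x, x ^ n ∂(gaussianReal m v.toNNReal) := by
  rw [← hX, integral_map hXm.aemeasurable (measurable_id'.pow_const n).aestronglyMeasurable]

lemma omega_int {X : Ω → ℝ} (hXm : Measurable X) {m v : ℝ} (hv : 0 < v)
    (hX : Measure.map X ℙ = gaussianReal m v.toNNReal) {n : ℕ} (hn : n ≤ 4) :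
    Integrable (fun ω => X ω ^ n) ℙ := by
  have h : Integrable ((fun x => x ^ n) ∘ X) ℙ :=
    (integrable_map_measure (measurable_id'.pow_const n).aestronglyMeasurable
      hXm.aemeasurable).mp (by rw [hX]; exact intg_gauss_pow hv hn)
  exact h

end OmegaSide

theorem stmt_18 {Ω : Type*} [MeasureSpace Ω] [IsProbabilityMeasure (ℙ : Measure Ω)]
    (β γ σX σY τ : ℝ) (hσX : 0 < σX) (hσY : 0 < σY) (hτ : 0 ≤ τ)
    (X Y : Ω → ℝ) (hXm : Measurable X) (hYm : Measurable Y)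
    (hX : Measure.map X ℙ = gaussianReal γ (Real.toNNReal (σX ^ 2)))
    (hY : Measure.map Y ℙ = gaussianReal (β * γ) (Real.toNNReal (σY ^ 2 + τ ^ 2)))
    (hind : IndepFun X Y ℙ) :
    (∫ ω, (X ω * Y ω - β * X ω ^ 2 + β * σX ^ 2) ∂ℙ = 0) ∧
      variance (fun ω => (X ω * Y ω - β * X ω ^ 2 + β * σX ^ 2) / σY ^ 2) ℙ =
        (1 + τ ^ 2 / σY ^ 2) * (γ ^ 2 / σY ^ 2 + σX ^ 2 / σY ^ 2) +
          β ^ 2 * (σX ^ 2 / σY ^ 2) * (γ ^ 2 / σY ^ 2 + 2 * (σX ^ 2 / σY ^ 2)) := by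
  have hvX : (0:ℝ) < σX ^ 2 := by positivity
  have hvY : (0:ℝ) < σY ^ 2 + τ ^ 2 := by positivity
  -- moments of X
  have mX1 : ∫ ω, X ω ∂ℙ = γ := by
    have h := (omega_mom hXm hX 1).trans (by simp only [pow_one]; exact gauss_mom1 hvX)
    simpa using h
  have mX2 : ∫ ω, X ω ^ 2 ∂ℙ = γ ^ 2 + σX ^ 2 := (omega_mom hXm hX 2).trans (gauss_mom2 hvX)
  have mX3 : ∫ ω, X ω ^ 3 ∂ℙ = γ ^ 3 + 3 * γ * σX ^ 2 :=
    (omega_mom hXm hX 3).trans (gauss_mom3 hvX)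
  have mX4 : ∫ ω, X ω ^ 4 ∂ℙ = γ ^ 4 + 6 * γ ^ 2 * σX ^ 2 + 3 * (σX ^ 2) ^ 2 :=
    (omega_mom hXm hX 4).trans (gauss_mom4 hvX)
  have mY1 : ∫ ω, Y ω ∂ℙ = β * γ := by
    have h := (omega_mom hYm hY 1).trans (by simp only [pow_one]; exact gauss_mom1 hvY)
    simpa using h
  have mY2 : ∫ ω, Y ω ^ 2 ∂ℙ = (β * γ) ^ 2 + (σY ^ 2 + τ ^ 2) :=
    (omega_mom hYm hY 2).trans (gauss_mom2 hvY)
  -- integrability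
  have iX1 : Integrable X ℙ := by simpa using omega_int hXm hvX hX (n := 1) (by norm_num)
  have iX2 : Integrable (fun ω => X ω ^ 2) ℙ := omega_int hXm hvX hX (by norm_num)
  have iX3 : Integrable (fun ω => X ω ^ 3) ℙ := omega_int hXm hvX hX (by norm_num)
  have iX4 : Integrable (fun ω => X ω ^ 4) ℙ := omega_int hXm hvX hX (by norm_num)
  have iY1 : Integrable Y ℙ := by simpa using omega_int hYm hvY hY (n := 1) (by norm_num)
  have iY2 : Integrable (fun ω => Y ω ^ 2) ℙ := omega_int hYm hvY hY (by norm_num)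
  -- independence of powers
  have hind22 : IndepFun (fun ω => X ω ^ 2) (fun ω => Y ω ^ 2) ℙ :=
    hind.comp (measurable_id'.pow_const 2) (measurable_id'.pow_const 2)
  have hind31 : IndepFun (fun ω => X ω ^ 3) Y ℙ :=
    hind.comp (measurable_id'.pow_const 3) measurable_id
  -- products
  have I11 : Integrable (fun ω => X ω * Y ω) ℙ := hind.integrable_mul iX1 iY1
  have I22 : Integrable (fun ω => X ω ^ 2 * Y ω ^ 2) ℙ := hind22.integrable_mul iX2 iY2
  have I31 : Integrable (fun ω => X ω ^ 3 * Y ω) ℙ := hind31.integrable_mul iX3 iY1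
  have E11 : ∫ ω, X ω * Y ω ∂ℙ = γ * (β * γ) := by
    have h : ∫ ω, X ω * Y ω ∂ℙ = (∫ ω, X ω ∂ℙ) * ∫ ω, Y ω ∂ℙ :=
      hind.integral_fun_mul_eq_mul_integral iX1.aestronglyMeasurable iY1.aestronglyMeasurable
    rw [h, mX1, mY1]
  have E22 : ∫ ω, X ω ^ 2 * Y ω ^ 2 ∂ℙ = (γ ^ 2 + σX ^ 2) * ((β * γ) ^ 2 + (σY ^ 2 + τ ^ 2)) := by
    have h : ∫ ω, X ω ^ 2 * Y ω ^ 2 ∂ℙ = (∫ ω, X ω ^ 2 ∂ℙ) * ∫ ω, Y ω ^ 2 ∂ℙ :=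
      hind22.integral_fun_mul_eq_mul_integral iX2.aestronglyMeasurable iY2.aestronglyMeasurable
    rw [h, mX2, mY2]
  have E31 : ∫ ω, X ω ^ 3 * Y ω ∂ℙ = (γ ^ 3 + 3 * γ * σX ^ 2) * (β * γ) := by
    have h : ∫ ω, X ω ^ 3 * Y ω ∂ℙ = (∫ ω, X ω ^ 3 ∂ℙ) * ∫ ω, Y ω ∂ℙ :=
      hind31.integral_fun_mul_eq_mul_integral iX3.aestronglyMeasurable iY1.aestronglyMeasurable
    rw [h, mX3, mY1]
  -- part 1
  have key1 : ∫ ω, (X ω * Y ω - β * X ω ^ 2 + β * σX ^ 2) ∂ℙ = 0 := by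
    have h1 : ∫ ω, (X ω * Y ω - β * X ω ^ 2) + β * σX ^ 2 ∂ℙ
        = (∫ ω, X ω * Y ω - β * X ω ^ 2 ∂ℙ) + ∫ _ω, (β * σX ^ 2 : ℝ) ∂ℙ :=
      integral_add (I11.sub (iX2.const_mul β)) (integrable_const _)
    have h2 : ∫ ω, X ω * Y ω - β * X ω ^ 2 ∂ℙ
        = (∫ ω, X ω * Y ω ∂ℙ) - ∫ ω, β * X ω ^ 2 ∂ℙ :=
      integral_sub I11 (iX2.const_mul β)
    rw [h1, h2, integral_const_mul, integral_const]
    simp only [measure_univ, ENNReal.toReal_one, probReal_univ, smul_eq_mul, one_mul]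
    rw [E11, mX2]; ring
  refine ⟨key1, ?_⟩
  -- part 2
  set Z : Ω → ℝ := fun ω => X ω * Y ω - β * X ω ^ 2 + β * σX ^ 2 with hZ
  have hfun : (fun ω => Z ω / σY ^ 2) = (σY ^ 2)⁻¹ • Z := by
    funext ω; simp [div_eq_inv_mul]
  rw [hfun, variance_smul]
  -- Memℒp
  have msqXY : MemLp (fun ω => X ω * Y ω) 2 ℙ := by
    refine (memLp_two_iff_integrable_sq (hXm.mul hYm).aestronglyMeasurable).2 ?_
    show Integrable (fun ω => (X ω * Y ω) ^ 2) ℙ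
    have h : (fun ω => (X ω * Y ω) ^ 2) = fun ω => X ω ^ 2 * Y ω ^ 2 := by
      funext ω; ring
    rw [h]; exact I22
  have msqX2 : MemLp (fun ω => X ω ^ 2) 2 ℙ := by
    refine (memLp_two_iff_integrable_sq (hXm.pow_const 2).aestronglyMeasurable).2 ?_
    show Integrable (fun ω => (X ω ^ 2) ^ 2) ℙ
    have h : (fun ω => (X ω ^ 2) ^ 2) = fun ω => X ω ^ 4 := by
      funext ω; ring
    rw [h]; exact iX4
  have hZ2 : MemLp Z 2 ℙ := (msqXY.sub (msqX2.const_mul β)).add (memLp_const _)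
  rw [variance_eq_sub hZ2]
  have hEZ : (∫ ω, Z ω ∂ℙ) = 0 := key1
  have hZsq : (Z ^ 2) = fun ω =>
      (X ω ^ 2 * Y ω ^ 2 + β ^ 2 * X ω ^ 4 + (β * σX ^ 2) ^ 2
        + 2 * (β * σX ^ 2) * (X ω * Y ω))
      - (2 * β * (X ω ^ 3 * Y ω) + 2 * (β ^ 2 * σX ^ 2) * X ω ^ 2) := by
    funext ω; simp only [Pi.pow_apply, hZ]; ring
  have hInt1 : Integrable (fun ω => X ω ^ 2 * Y ω ^ 2 + β ^ 2 * X ω ^ 4 + (β * σX ^ 2) ^ 2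
      + 2 * (β * σX ^ 2) * (X ω * Y ω)) ℙ :=
    ((I22.add (iX4.const_mul _)).add (integrable_const _)).add (I11.const_mul _)
  have hInt2 : Integrable (fun ω => 2 * β * (X ω ^ 3 * Y ω)
      + 2 * (β ^ 2 * σX ^ 2) * X ω ^ 2) ℙ :=
    (I31.const_mul _).add (iX2.const_mul _)
  have hEZ2 : (∫ ω, (Z ^ 2) ω ∂ℙ)
      = (γ ^ 2 + σX ^ 2) * ((β * γ) ^ 2 + (σY ^ 2 + τ ^ 2))
        + β ^ 2 * (γ ^ 4 + 6 * γ ^ 2 * σX ^ 2 + 3 * (σX ^ 2) ^ 2)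
        + (β * σX ^ 2) ^ 2 + 2 * (β * σX ^ 2) * (γ * (β * γ))
        - (2 * β * ((γ ^ 3 + 3 * γ * σX ^ 2) * (β * γ))
          + 2 * (β ^ 2 * σX ^ 2) * (γ ^ 2 + σX ^ 2)) := by
    simp only [hZsq]
    have h1 : ∫ ω, (X ω ^ 2 * Y ω ^ 2 + β ^ 2 * X ω ^ 4 + (β * σX ^ 2) ^ 2
          + 2 * (β * σX ^ 2) * (X ω * Y ω))
        - (2 * β * (X ω ^ 3 * Y ω) + 2 * (β ^ 2 * σX ^ 2) * X ω ^ 2) ∂ℙ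
        = (∫ ω, X ω ^ 2 * Y ω ^ 2 + β ^ 2 * X ω ^ 4 + (β * σX ^ 2) ^ 2
            + 2 * (β * σX ^ 2) * (X ω * Y ω) ∂ℙ)
          - ∫ ω, 2 * β * (X ω ^ 3 * Y ω) + 2 * (β ^ 2 * σX ^ 2) * X ω ^ 2 ∂ℙ :=
      integral_sub hInt1 hInt2
    have h2 : ∫ ω, X ω ^ 2 * Y ω ^ 2 + β ^ 2 * X ω ^ 4 + (β * σX ^ 2) ^ 2
          + 2 * (β * σX ^ 2) * (X ω * Y ω) ∂ℙ
        = (∫ ω, X ω ^ 2 * Y ω ^ 2 + β ^ 2 * X ω ^ 4 + (β * σX ^ 2) ^ 2 ∂ℙ)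
          + ∫ ω, 2 * (β * σX ^ 2) * (X ω * Y ω) ∂ℙ :=
      integral_add ((I22.add (iX4.const_mul _)).add (integrable_const _)) (I11.const_mul _)
    have h3 : ∫ ω, X ω ^ 2 * Y ω ^ 2 + β ^ 2 * X ω ^ 4 + (β * σX ^ 2) ^ 2 ∂ℙ
        = (∫ ω, X ω ^ 2 * Y ω ^ 2 + β ^ 2 * X ω ^ 4 ∂ℙ) + ∫ _ω, ((β * σX ^ 2) ^ 2 : ℝ) ∂ℙ :=
      integral_add (I22.add (iX4.const_mul _)) (integrable_const _)
    have h4 : ∫ ω, X ω ^ 2 * Y ω ^ 2 + β ^ 2 * X ω ^ 4 ∂ℙ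
        = (∫ ω, X ω ^ 2 * Y ω ^ 2 ∂ℙ) + ∫ ω, β ^ 2 * X ω ^ 4 ∂ℙ :=
      integral_add I22 (iX4.const_mul _)
    have h5 : ∫ ω, 2 * β * (X ω ^ 3 * Y ω) + 2 * (β ^ 2 * σX ^ 2) * X ω ^ 2 ∂ℙ
        = (∫ ω, 2 * β * (X ω ^ 3 * Y ω) ∂ℙ) + ∫ ω, 2 * (β ^ 2 * σX ^ 2) * X ω ^ 2 ∂ℙ :=
      integral_add (I31.const_mul _) (iX2.const_mul _)
    rw [h1, h2, h3, h4, h5, integral_const_mul, integral_const_mul, integral_const_mul,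
      integral_const_mul, integral_const]
    simp only [measure_univ, ENNReal.toReal_one, probReal_univ, smul_eq_mul, one_mul]
    rw [E22, E31, E11, mX2, mX4]
  rw [show (∫ ω, (Z ^ 2) ω ∂ℙ) = ∫ ω, (Z ^ 2) ω ∂ℙ from rfl] at hEZ2
  rw [show ℙ[Z ^ 2] = ∫ ω, (Z ^ 2) ω ∂ℙ from rfl, show ℙ[Z] = ∫ ω, Z ω ∂ℙ from rfl,
    hEZ2, hEZ]
  have hne : σY ^ 2 ≠ 0 := by positivity
  field_simp
  ring
end
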